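/- Let p, p' ∈ ℝⁿ be nonnegative vectors and let m be the number of indices v with p_v ≠ p'_v (assume m ≥ 1). Then Σ_{v} |max(log(p_v·n), 0) - max(log(p'_v·n), 0)| ≤ m·log(1 + ‖p - p'‖₁·n/m). -/
import Mathlib

lemma log_sub_log_le (x y : ℝ) (hx : 1 ≤ x) (hy : 1 ≤ y) :
    Real.log x - Real.log y ≤ Real.log (1 + |x - y|) := by
  rw [← Real.log_div (by linarith) (by linarith)]
  apply Real.log_le_log (by positivity)
  rw [div_le_iff₀ (by linarith)]
  nlinarith [le_abs_self (x - y), abs_nonneg (x - y)]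

lemma maxlog_abs_le (a b : ℝ) (ha : 0 ≤ a) (hb : 0 ≤ b) :
    |max (Real.log a) 0 - max (Real.log b) 0| ≤ Real.log (1 + |a - b|) := by
  have key : ∀ c : ℝ, 0 ≤ c → max (Real.log c) 0 = Real.log (max c 1) := by
    intro c hc
    rcases le_or_gt 1 c with h | h
    · rw [max_eq_left h, max_eq_left (Real.log_nonneg h)]
    · rw [max_eq_right h.le, max_eq_right (Real.log_nonpos hc h.le), Real.log_one]
  rw [key a ha, key b hb]
  have hmax : |max a 1 - max b 1| ≤ |a - b| := abs_max_sub_max_le_abs a b 1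
  have h1 : Real.log (max a 1) - Real.log (max b 1) ≤ Real.log (1 + |a - b|) := by
    refine le_trans (log_sub_log_le _ _ (le_max_right _ _) (le_max_right _ _)) ?_
    apply Real.log_le_log (by positivity); linarith
  have h2 : Real.log (max b 1) - Real.log (max a 1) ≤ Real.log (1 + |a - b|) := by
    refine le_trans (log_sub_log_le _ _ (le_max_right _ _) (le_max_right _ _)) ?_
    apply Real.log_le_log (by positivity)
    rw [abs_sub_comm] at hmax; linarith
  exact abs_sub_le_iff.mpr ⟨h1, h2⟩

theorem embedding_sensitivity_sum_bound (n : ℕ) (hn : 1 ≤ n) (p p' : Fin n → ℝ)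
    (hp : ∀ v, 0 ≤ p v) (hp' : ∀ v, 0 ≤ p' v)
    (m : ℕ) (hm : m = (Finset.univ.filter (fun v => p v ≠ p' v)).card) (hm1 : 1 ≤ m) :
    (∑ v, |max (Real.log (p v * n)) 0 - max (Real.log (p' v * n)) 0|)
      ≤ m * Real.log (1 + (∑ v, |p v - p' v|) * n / m) := by
  classical
  set S := Finset.univ.filter (fun v => p v ≠ p' v) with hS
  have hcard : (S.card : ℝ) = (m : ℝ) := by rw [hm]
  have hm0 : (0:ℝ) < m := by exact_mod_cast hm1
  set g : Fin n → ℝ := fun v => 1 + |p v - p' v| * n with hg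
  have hg1 : ∀ v, 1 ≤ g v := fun v => by
    have : 0 ≤ |p v - p' v| * n := by positivity
    simp only [hg]; linarith
  -- restrict the sum to S
  have h1 : (∑ v, |max (Real.log (p v * n)) 0 - max (Real.log (p' v * n)) 0|)
      = ∑ v ∈ S, |max (Real.log (p v * n)) 0 - max (Real.log (p' v * n)) 0| := by
    refine (Finset.sum_subset S.subset_univ ?_).symm
    intro v _ hv
    simp only [hS, Finset.mem_filter, Finset.mem_univ, true_and, not_not] at hv
    rw [hv]; simp
  have hsum : (∑ v, |p v - p' v|) = ∑ v ∈ S, |p v - p' v| := by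
    refine (Finset.sum_subset S.subset_univ ?_).symm
    intro v _ hv
    simp only [hS, Finset.mem_filter, Finset.mem_univ, true_and, not_not] at hv
    rw [hv]; simp
  -- pointwise bound
  have h2 : ∑ v ∈ S, |max (Real.log (p v * n)) 0 - max (Real.log (p' v * n)) 0|
      ≤ ∑ v ∈ S, Real.log (g v) := by
    apply Finset.sum_le_sum
    intro v _
    have := maxlog_abs_le (p v * n) (p' v * n) (mul_nonneg (hp v) n.cast_nonneg) (mul_nonneg (hp' v) n.cast_nonneg)
    have habs : |p v * n - p' v * n| = |p v - p' v| * n := by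
      rw [← sub_mul, abs_mul, abs_of_nonneg (by positivity : (0:ℝ) ≤ (n:ℝ))]
    rwa [habs] at this
  -- Jensen
  have jensen := strictConcaveOn_log_Ioi.concaveOn.le_map_sum
    (t := S) (w := fun _ => (m:ℝ)⁻¹) (p := g)
    (fun i _ => by positivity)
    (by rw [Finset.sum_const, nsmul_eq_mul, hcard, mul_inv_cancel₀ hm0.ne'])
    (fun i _ => Set.mem_Ioi.mpr (lt_of_lt_of_le one_pos (hg1 i)))
  simp only [smul_eq_mul] at jensen
  have h3 : ∑ v ∈ S, (m:ℝ)⁻¹ * g v = 1 + (∑ v, |p v - p' v|) * n / m := by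
    rw [← Finset.mul_sum]
    simp only [hg]
    rw [Finset.sum_add_distrib, Finset.sum_const, nsmul_eq_mul, mul_one, ← Finset.sum_mul,
      ← hsum, mul_add, hcard, inv_mul_cancel₀ hm0.ne']
    ring
  rw [h3] at jensen
  have h4 : ∑ v ∈ S, Real.log (g v) = m * ∑ v ∈ S, (m:ℝ)⁻¹ * Real.log (g v) := by
    rw [← Finset.mul_sum, ← mul_assoc, mul_inv_cancel₀ hm0.ne', one_mul]
  calc (∑ v, |max (Real.log (p v * n)) 0 - max (Real.log (p' v * n)) 0|)
      ≤ ∑ v ∈ S, Real.log (g v) := by rw [h1]; exact h2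
    _ = m * ∑ v ∈ S, (m:ℝ)⁻¹ * Real.log (g v) := h4
    _ ≤ m * Real.log (1 + (∑ v, |p v - p' v|) * n / m) := by
        exact mul_le_mul_of_nonneg_left jensen hm0.le
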